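/- arXiv:2603.10389 — 2 statements merged into one kernel-verified Lean document; each statement's English description precedes it below -/
import Mathlib

section
/- The function f(u) = log(1 + e^{-√u}) defined for u ≥ 0 is convex in u. -/
/-! The function `t ↦ log (1 + exp (-t))` is nonincreasing and convex (its derivative
`-(1 + exp t)⁻¹` increases), and `√` is concave on `[0, ∞)`; a convex nonincreasing function of a
concave function is convex. -/

open Real Set

lemma image_sqrt_Ici_zero : sqrt '' Ici 0 = Ici 0 :=
  Subset.antisymm (image_subset_iff.2 fun x _ => sqrt_nonneg x)
    fun y hy => ⟨y ^ 2, sq_nonneg y, sqrt_sq hy⟩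

theorem ConvexOn.comp_sqrt {g : ℝ → ℝ} (hg : ConvexOn ℝ (Ici 0) g)
    (hg_anti : AntitoneOn g (Ici 0)) : ConvexOn ℝ (Ici 0) (fun u => g (√u)) := by
  rw [← image_sqrt_Ici_zero] at hg hg_anti
  exact hg.comp_concaveOn strictConcaveOn_sqrt.concaveOn hg_anti

lemma hasDerivAt_log_one_add_exp_neg (t : ℝ) :
    HasDerivAt (fun t => log (1 + exp (-t))) (-(1 + exp t)⁻¹) t := by
  have h_inner : HasDerivAt (fun t => 1 + exp (-t)) (-exp (-t)) t := by
    simpa using ((hasDerivAt_neg t).exp).const_add 1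
  convert h_inner.log (by positivity) using 1
  rw [exp_neg]
  field_simp
  ring

lemma convexOn_log_one_add_exp_neg : ConvexOn ℝ univ (fun t => log (1 + exp (-t))) := by
  have h_deriv : deriv (fun t => log (1 + exp (-t))) = fun t => -(1 + exp t)⁻¹ :=
    funext fun t => (hasDerivAt_log_one_add_exp_neg t).deriv
  refine Monotone.convexOn_univ_of_deriv
    (fun t => (hasDerivAt_log_one_add_exp_neg t).differentiableAt) ?_
  rw [h_deriv]
  intro a b hab
  simp only [neg_le_neg_iff]
  gcongr

lemma antitone_log_one_add_exp_neg : Antitone (fun t => log (1 + exp (-t))) := by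
  intro a b hab
  dsimp only
  gcongr

theorem stmt_6 :
    ConvexOn ℝ (Set.Ici (0 : ℝ))
      (fun u => Real.log (1 + Real.exp (-Real.sqrt u))) :=
  (convexOn_log_one_add_exp_neg.subset (subset_univ _) (convex_Ici 0)).comp_sqrt
    (antitone_log_one_add_exp_neg.antitoneOn _)
end

section
/- Let L_E(β) = -log(∑ᵢⱼ wᵢⱼ g(aᵢⱼᵀβ)) with wᵢⱼ ≥ 0 not all zero and g(x)=1/(1+e^{-x}). Fix β⁽ᵗ⁾ and let Vᵢⱼ = wᵢⱼ g(aᵢⱼᵀβ⁽ᵗ⁾)/∑ₖₗ wₖₗ g(aₖₗᵀβ⁽ᵗ⁾). Then for every β: L_E(β) ≤ ∑ᵢⱼ Vᵢⱼ log(1 + exp(-aᵢⱼᵀβ)) - ∑_{(i,j): wᵢⱼ>0} Vᵢⱼ log wᵢⱼ + ∑_{(i,j): Vᵢⱼ>0} Vᵢⱼ log Vᵢⱼ, with equality at β = β⁽ᵗ⁾. -/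
open Finset in
theorem gibbs_aux {ι : Type*} [Fintype ι] (x V : ι → ℝ)
    (hx : ∀ i, 0 ≤ x i) (hV : ∀ i, 0 ≤ V i)
    (hpos : ∀ i, 0 < V i → 0 < x i)
    (hsum : ∑ i, V i = 1) (hT : 0 < ∑ i, x i) :
    ∑ i, (if 0 < V i then V i * Real.log (x i / V i) else 0) ≤ Real.log (∑ i, x i) := by
  set T := ∑ i, x i with hTdef
  have h1 : ∀ i ∈ Finset.univ, (if 0 < V i then V i * Real.log (x i / V i) else 0)
      ≤ x i / T - V i + V i * Real.log T := by
    intro i _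
    by_cases h : 0 < V i
    · rw [if_pos h]
      have hxi := hpos i h
      have hlog : Real.log (x i / (V i * T)) ≤ x i / (V i * T) - 1 :=
        Real.log_le_sub_one_of_pos (by positivity)
      have e1 : Real.log (x i / (V i * T)) = Real.log (x i / V i) - Real.log T := by
        rw [Real.log_div (ne_of_gt hxi) (by positivity),
          Real.log_mul (ne_of_gt h) (ne_of_gt hT),
          Real.log_div (ne_of_gt hxi) (ne_of_gt h)]
        ring
      have e2 : V i * (x i / (V i * T)) = x i / T := by
        field_simp
      nlinarith [mul_le_mul_of_nonneg_left hlog (le_of_lt h)]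
    · rw [if_neg h]
      have hVi : V i = 0 := le_antisymm (not_lt.mp h) (hV i)
      rw [hVi]
      have : 0 ≤ x i / T := div_nonneg (hx i) (le_of_lt hT)
      linarith
  calc ∑ i, (if 0 < V i then V i * Real.log (x i / V i) else 0)
      ≤ ∑ i, (x i / T - V i + V i * Real.log T) := Finset.sum_le_sum h1
    _ = (∑ i, x i) / T - (∑ i, V i) + (∑ i, V i) * Real.log T := by
        rw [Finset.sum_add_distrib, Finset.sum_sub_distrib, Finset.sum_div,
          ← Finset.sum_mul]
    _ = Real.log T := by
        rw [hsum, ← hTdef, div_self (ne_of_gt hT)]; ring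

theorem stmt_15 (n p : ℕ) (w : Fin n → Fin n → ℝ) (a : Fin n → Fin n → Fin p → ℝ)
    (hw0 : ∀ i j, 0 ≤ w i j) (hw : ∃ i j, 0 < w i j)
    (βt : Fin p → ℝ)
    (V : Fin n → Fin n → ℝ)
    (hV : ∀ i j, V i j = (w i j * (1 / (1 + Real.exp (-(∑ k, a i j k * βt k)))))
        / (∑ i', ∑ j', w i' j' * (1 / (1 + Real.exp (-(∑ k, a i' j' k * βt k)))))) :
    (∀ β : Fin p → ℝ,
      -Real.log (∑ i, ∑ j, w i j * (1 / (1 + Real.exp (-(∑ k, a i j k * β k)))))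
        ≤ (∑ i, ∑ j, V i j * Real.log (1 + Real.exp (-(∑ k, a i j k * β k))))
          - (∑ i, ∑ j, if 0 < w i j then V i j * Real.log (w i j) else 0)
          + (∑ i, ∑ j, if 0 < V i j then V i j * Real.log (V i j) else 0)) ∧
    (-Real.log (∑ i, ∑ j, w i j * (1 / (1 + Real.exp (-(∑ k, a i j k * βt k)))))
        = (∑ i, ∑ j, V i j * Real.log (1 + Real.exp (-(∑ k, a i j k * βt k))))
          - (∑ i, ∑ j, if 0 < w i j then V i j * Real.log (w i j) else 0)
          + (∑ i, ∑ j, if 0 < V i j then V i j * Real.log (V i j) else 0)) := by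
  have gpos : ∀ t : ℝ, 0 < 1 / (1 + Real.exp (-t)) := fun t => by positivity
  set S := ∑ i', ∑ j', w i' j' * (1 / (1 + Real.exp (-(∑ k, a i' j' k * βt k)))) with hSdef
  have hposall : ∀ β : Fin p → ℝ,
      0 < ∑ i, ∑ j, w i j * (1 / (1 + Real.exp (-(∑ k, a i j k * β k)))) := by
    intro β
    obtain ⟨i0, j0, h0⟩ := hw
    refine Finset.sum_pos'
      (fun i _ => Finset.sum_nonneg fun j _ => mul_nonneg (hw0 i j) (le_of_lt (gpos _)))
      ⟨i0, Finset.mem_univ _, Finset.sum_pos'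
        (fun j _ => mul_nonneg (hw0 i0 j) (le_of_lt (gpos _)))
        ⟨j0, Finset.mem_univ _, mul_pos h0 (gpos _)⟩⟩
  have hS0 : 0 < S := hSdef ▸ hposall βt
  have hVnn : ∀ i j, 0 ≤ V i j := fun i j => by
    rw [hV]; exact div_nonneg (mul_nonneg (hw0 i j) (le_of_lt (gpos _))) (le_of_lt hS0)
  have hViff : ∀ i j, (0 < V i j ↔ 0 < w i j) := by
    intro i j
    constructor
    · intro h
      rcases (hw0 i j).lt_or_eq with h' | h'
      · exact h'
      · exfalso; rw [hV i j, ← h'] at h; simp at h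
    · intro h
      rw [hV i j]; exact div_pos (mul_pos h (gpos _)) hS0
  have hVsum : ∑ i, ∑ j, V i j = 1 := by
    simp_rw [hV, ← Finset.sum_div, ← hSdef]
    exact div_self (ne_of_gt hS0)
  -- per-term identity
  have hterm : ∀ (β : Fin p → ℝ) (i j : Fin n),
      V i j * Real.log (1 + Real.exp (-(∑ k, a i j k * β k)))
        - (if 0 < w i j then V i j * Real.log (w i j) else 0)
        + (if 0 < V i j then V i j * Real.log (V i j) else 0)
      = -(if 0 < V i j then
          V i j * Real.log ((w i j * (1 / (1 + Real.exp (-(∑ k, a i j k * β k))))) / V i j)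
          else 0) := by
    intro β i j
    by_cases h : 0 < w i j
    · have hVij : 0 < V i j := (hViff i j).mpr h
      have hE : (0:ℝ) < 1 + Real.exp (-(∑ k, a i j k * β k)) := by positivity
      rw [if_pos h, if_pos hVij, if_pos hVij,
        Real.log_div (by positivity) (ne_of_gt hVij),
        Real.log_mul (ne_of_gt h) (ne_of_gt (gpos _)),
        one_div, Real.log_inv]
      ring
    · have hVij : V i j = 0 := by
        have := mt (hViff i j).mp h
        exact le_antisymm (not_lt.mp this) (hVnn i j)
      rw [hVij]
      simp
  have key : ∀ (β : Fin p → ℝ),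
      (∑ i, ∑ j, V i j * Real.log (1 + Real.exp (-(∑ k, a i j k * β k))))
        - (∑ i, ∑ j, if 0 < w i j then V i j * Real.log (w i j) else 0)
        + (∑ i, ∑ j, if 0 < V i j then V i j * Real.log (V i j) else 0)
      = -∑ q : Fin n × Fin n, (if 0 < V q.1 q.2 then
          V q.1 q.2 * Real.log ((w q.1 q.2 * (1 / (1 + Real.exp (-(∑ k, a q.1 q.2 k * β k))))) / V q.1 q.2)
          else 0) := by
    intro β
    rw [← Finset.sum_neg_distrib, Fintype.sum_prod_type,
      ← Finset.sum_sub_distrib, ← Finset.sum_add_distrib]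
    simp_rw [← Finset.sum_sub_distrib, ← Finset.sum_add_distrib]
    exact Finset.sum_congr rfl fun i _ => Finset.sum_congr rfl fun j _ => hterm β i j
  constructor
  · intro β
    have hT : (∑ i, ∑ j, w i j * (1 / (1 + Real.exp (-(∑ k, a i j k * β k)))))
        = ∑ q : Fin n × Fin n, w q.1 q.2 * (1 / (1 + Real.exp (-(∑ k, a q.1 q.2 k * β k)))) :=
      (Fintype.sum_prod_type (f := fun q : Fin n × Fin n =>
        w q.1 q.2 * (1 / (1 + Real.exp (-(∑ k, a q.1 q.2 k * β k)))))).symm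
    rw [key β, neg_le_neg_iff, hT]
    exact gibbs_aux (fun q : Fin n × Fin n => w q.1 q.2 * (1 / (1 + Real.exp (-(∑ k, a q.1 q.2 k * β k)))))
      (fun q => V q.1 q.2)
      (fun q => mul_nonneg (hw0 q.1 q.2) (le_of_lt (gpos _)))
      (fun q => hVnn q.1 q.2)
      (fun q hq => mul_pos ((hViff q.1 q.2).mp hq) (gpos _))
      (((Fintype.sum_prod_type (f := fun q : Fin n × Fin n => V q.1 q.2)).trans hVsum))
      (hT ▸ hposall β)
  · rw [key βt]
    have hx : ∀ i j : Fin n, w i j * (1 / (1 + Real.exp (-(∑ k, a i j k * βt k)))) = V i j * S := by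
      intro i j
      rw [hV i j, div_mul_cancel₀]
      exact ne_of_gt hS0
    have : ∀ q : Fin n × Fin n, (if 0 < V q.1 q.2 then
        V q.1 q.2 * Real.log ((w q.1 q.2 * (1 / (1 + Real.exp (-(∑ k, a q.1 q.2 k * βt k))))) / V q.1 q.2)
        else 0) = V q.1 q.2 * Real.log S := by
      intro q
      by_cases h : 0 < V q.1 q.2
      · rw [if_pos h, hx q.1 q.2, mul_div_cancel_left₀ S (ne_of_gt h)]
      · rw [if_neg h, le_antisymm (not_lt.mp h) (hVnn q.1 q.2)]; ring
    rw [Finset.sum_congr rfl (fun q _ => this q), ← Finset.sum_mul,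
      Fintype.sum_prod_type, hVsum, one_mul]
end
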